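/- arXiv:2507.15657 — 4 statements merged into one kernel-verified Lean document; each statement's English description precedes it below -/
import Mathlib

section
/- Let μ : 𝔻 → 𝔹 with ‖μ‖_{L^∞(𝔻,𝔹)} ≤ c < 1. A C¹ function w = p⁺w⁺ + p⁻w⁻ : 𝔻 → 𝔹 solves the bicomplex Beltrami equation ∂̄w = μ ∂w if and only if (w⁺)* solves the complex Beltrami equation ∂(w⁺)*/∂z* = (μ⁺)* ∂(w⁺)*/∂z and w⁻ solves ∂w⁻/∂z* = μ⁻ ∂w⁻/∂z. -/
open Complex MeasureTheory Metric Set Filter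

noncomputable section

/-- The bicomplex numbers: `z₁ + j z₂` with `z₁, z₂ ∈ ℂ`, `j² = -1`. -/
structure Bicomplex where
  z1 : ℂ
  z2 : ℂ

namespace Bicomplex

@[ext] theorem ext' {u v : Bicomplex} (h1 : u.z1 = v.z1) (h2 : u.z2 = v.z2) : u = v := by
  cases u; cases v; simp_all

instance : Add Bicomplex := ⟨fun u v => ⟨u.z1 + v.z1, u.z2 + v.z2⟩⟩
instance : Mul Bicomplex := ⟨fun u v => ⟨u.z1 * v.z1 - u.z2 * v.z2, u.z1 * v.z2 + u.z2 * v.z1⟩⟩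
instance : Zero Bicomplex := ⟨⟨0, 0⟩⟩
instance : One Bicomplex := ⟨⟨1, 0⟩⟩
instance : Neg Bicomplex := ⟨fun u => ⟨-u.z1, -u.z2⟩⟩

@[simp] theorem add_z1 (u v : Bicomplex) : (u + v).z1 = u.z1 + v.z1 := rfl
@[simp] theorem add_z2 (u v : Bicomplex) : (u + v).z2 = u.z2 + v.z2 := rfl
@[simp] theorem mul_z1 (u v : Bicomplex) : (u * v).z1 = u.z1 * v.z1 - u.z2 * v.z2 := rfl
@[simp] theorem mul_z2 (u v : Bicomplex) : (u * v).z2 = u.z1 * v.z2 + u.z2 * v.z1 := rfl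
@[simp] theorem zero_z1 : (0 : Bicomplex).z1 = 0 := rfl
@[simp] theorem zero_z2 : (0 : Bicomplex).z2 = 0 := rfl
@[simp] theorem one_z1 : (1 : Bicomplex).z1 = 1 := rfl
@[simp] theorem one_z2 : (1 : Bicomplex).z2 = 0 := rfl
@[simp] theorem neg_z1 (u : Bicomplex) : (-u).z1 = -u.z1 := rfl
@[simp] theorem neg_z2 (u : Bicomplex) : (-u).z2 = -u.z2 := rfl

instance : CommRing Bicomplex where
  add := (· + ·)
  add_assoc := by intros; ext <;> simp <;> ring
  zero := 0
  zero_add := by intros; ext <;> simp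
  add_zero := by intros; ext <;> simp
  add_comm := by intros; ext <;> simp <;> ring
  mul := (· * ·)
  mul_assoc := by intros; ext <;> simp <;> ring
  one := 1
  one_mul := by intros; ext <;> simp
  mul_one := by intros; ext <;> simp
  left_distrib := by intros; ext <;> simp <;> ring
  right_distrib := by intros; ext <;> simp <;> ring
  zero_mul := by intros; ext <;> simp
  mul_zero := by intros; ext <;> simp
  neg := Neg.neg
  neg_add_cancel := by intros; ext <;> simp
  mul_comm := by intros; ext <;> simp <;> ring
  nsmul := nsmulRec
  zsmul := zsmulRec

/-- The bicomplex imaginary unit `j`. -/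
def j : Bicomplex := ⟨0, 1⟩

/-- Embedding of `ℂ` into the bicomplex numbers. -/
def ofC (z : ℂ) : Bicomplex := ⟨z, 0⟩

/-- The idempotent `p⁺ = (1 + j i)/2`. -/
def pp : Bicomplex := ⟨1 / 2, Complex.I / 2⟩

/-- The idempotent `p⁻ = (1 - j i)/2`. -/
def pm : Bicomplex := ⟨1 / 2, -(Complex.I / 2)⟩

/-- Idempotent component `w⁺ = z₁ - i z₂`. -/
def plus (w : Bicomplex) : ℂ := w.z1 - Complex.I * w.z2

/-- Idempotent component `w⁻ = z₁ + i z₂`. -/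
def minus (w : Bicomplex) : ℂ := w.z1 + Complex.I * w.z2

/-- Bicomplex conjugation `z₁ + j z₂ ↦ z₁ - j z₂`. -/
def bconj (w : Bicomplex) : Bicomplex := ⟨w.z1, -w.z2⟩

/-- The bicomplex norm `‖w‖_𝔹 = sqrt((|w⁺|² + |w⁻|²)/2)`. -/
def bnorm (w : Bicomplex) : ℝ :=
  Real.sqrt ((‖plus w‖ ^ 2 + ‖minus w‖ ^ 2) / 2)

/-- The bicomplexification `ẑ* = x - j y` of `z* = x - i y` for `z = x + i y`. -/
def hatStar (z : ℂ) : Bicomplex := ⟨(z.re : ℂ), -(z.im : ℂ)⟩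

/-- Complex Wirtinger derivative `∂f/∂z`. -/
def wz (f : ℂ → ℂ) (z : ℂ) : ℂ :=
  (fderiv ℝ f z 1 - Complex.I * fderiv ℝ f z Complex.I) / 2

/-- Complex Wirtinger derivative `∂f/∂z*`. -/
def wzbar (f : ℂ → ℂ) (z : ℂ) : ℂ :=
  (fderiv ℝ f z 1 + Complex.I * fderiv ℝ f z Complex.I) / 2

/-- Partial derivative in `x` of a bicomplex-valued function. -/
def dx (f : ℂ → Bicomplex) (z : ℂ) : Bicomplex :=
  ⟨fderiv ℝ (fun t => (f t).z1) z 1, fderiv ℝ (fun t => (f t).z2) z 1⟩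

/-- Partial derivative in `y` of a bicomplex-valued function. -/
def dy (f : ℂ → Bicomplex) (z : ℂ) : Bicomplex :=
  ⟨fderiv ℝ (fun t => (f t).z1) z Complex.I, fderiv ℝ (fun t => (f t).z2) z Complex.I⟩

/-- The bicomplex operator `∂ = (1/2)(∂ₓ - j ∂_y)`. -/
def bd (f : ℂ → Bicomplex) (z : ℂ) : Bicomplex := ofC (1 / 2) * (dx f z - j * dy f z)

/-- The bicomplex operator `∂̄ = (1/2)(∂ₓ + j ∂_y)`. -/
def bdbar (f : ℂ → Bicomplex) (z : ℂ) : Bicomplex := ofC (1 / 2) * (dx f z + j * dy f z)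

/-- Real differentiability of a bicomplex-valued function at a point. -/
def BDiffAt (f : ℂ → Bicomplex) (z : ℂ) : Prop :=
  DifferentiableAt ℝ (fun t => (f t).z1) z ∧ DifferentiableAt ℝ (fun t => (f t).z2) z

/-- `C^n`-smoothness of a bicomplex-valued function on a set. -/
def BContDiffOn (n : ℕ∞) (f : ℂ → Bicomplex) (s : Set ℂ) : Prop :=
  ContDiffOn ℝ n (fun t => (f t).z1) s ∧ ContDiffOn ℝ n (fun t => (f t).z2) s


/-- The point `r e^{iθ}` in the disk. -/
def circleAt (r θ : ℝ) : ℂ := (r : ℂ) * Complex.exp (θ * Complex.I)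

/-- Finiteness of the Hardy norm for a complex-valued function on the disk. -/
def HardyBddC (p : ℝ) (f : ℂ → ℂ) : Prop :=
  ∃ M : ℝ, ∀ r ∈ Set.Ioo (0:ℝ) 1,
    (∫ θ in (0:ℝ)..(2 * Real.pi), ‖f (circleAt r θ)‖ ^ p) ≤ M

/-- Finiteness of the Hardy norm for a bicomplex-valued function on the disk. -/
def HardyBddB (p : ℝ) (f : ℂ → Bicomplex) : Prop :=
  ∃ M : ℝ, ∀ r ∈ Set.Ioo (0:ℝ) 1,
    (∫ θ in (0:ℝ)..(2 * Real.pi), bnorm (f (circleAt r θ)) ^ p) ≤ M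

/-- The bicomplex function `p⁺ w⁺ + p⁻ w⁻` built from complex components. -/
def idem (wp wm : ℂ → ℂ) : ℂ → Bicomplex := fun t => pp * ofC (wp t) + pm * ofC (wm t)

/-- The complex Beltrami operator `∂/∂z* - μ ∂/∂z`. -/
def belOp (μ : ℂ → ℂ) (f : ℂ → ℂ) : ℂ → ℂ := fun z => wzbar f z - μ z * wz f z

/-- The bicomplex Beltrami operator `∂̄ - μ ∂`. -/
def bbelOp (μ : ℂ → Bicomplex) (f : ℂ → Bicomplex) : ℂ → Bicomplex :=
  fun z => bdbar f z - μ z * bd f z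

/-- A Stolz (nontangential approach) region at a boundary point `ζ` with aperture `a`. -/
def stolz (ζ : ℂ) (a : ℝ) : Set ℂ :=
  {z : ℂ | ‖z‖ < 1 ∧ ‖z - ζ‖ < a * (1 - ‖z‖)}

/-- Nontangential limit of a complex-valued function at a boundary point. -/
def NTLimC (f : ℂ → ℂ) (ζ L : ℂ) : Prop :=
  ∀ a : ℝ, 1 < a → Filter.Tendsto f (nhdsWithin ζ (stolz ζ a)) (nhds L)

/-- Nontangential limit of a bicomplex-valued function at a boundary point. -/
def NTLimB (f : ℂ → Bicomplex) (ζ : ℂ) (L : Bicomplex) : Prop :=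
  ∀ a : ℝ, 1 < a → Filter.Tendsto (fun z => bnorm (f z - L)) (nhdsWithin ζ (stolz ζ a)) (nhds 0)

end Bicomplex

open Bicomplex

theorem Bicomplex.beq_iff (u v : Bicomplex) : u = v ↔ u.z1 = v.z1 ∧ u.z2 = v.z2 :=
  ⟨fun h => by rw [h]; exact ⟨rfl, rfl⟩, fun h => ext' h.1 h.2⟩

@[simp] theorem Bicomplex.sub_z1 (u v : Bicomplex) : (u - v).z1 = u.z1 - v.z1 := by
  show (u + -v).z1 = _; simp [sub_eq_add_neg]

@[simp] theorem Bicomplex.sub_z2 (u v : Bicomplex) : (u - v).z2 = u.z2 - v.z2 := by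
  show (u + -v).z2 = _; simp [sub_eq_add_neg]

theorem stmt7 (c : ℝ) (hc : c < 1) (μ : ℂ → Bicomplex)
    (hμ : ∀ z ∈ ball (0:ℂ) 1, bnorm (μ z) ≤ c)
    (wp wm : ℂ → ℂ)
    (hwp : ∀ z ∈ ball (0:ℂ) 1, DifferentiableAt ℝ wp z)
    (hwm : ∀ z ∈ ball (0:ℂ) 1, DifferentiableAt ℝ wm z) :
    (∀ z ∈ ball (0:ℂ) 1, bdbar (idem wp wm) z = μ z * bd (idem wp wm) z) ↔
      ((∀ z ∈ ball (0:ℂ) 1,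
          wzbar (fun t => (starRingEnd ℂ) (wp t)) z
            = (starRingEnd ℂ) (plus (μ z)) * wz (fun t => (starRingEnd ℂ) (wp t)) z) ∧
       (∀ z ∈ ball (0:ℂ) 1, wzbar wm z = minus (μ z) * wz wm z)) := by
  have main : ∀ z ∈ ball (0:ℂ) 1,
      ((bdbar (idem wp wm) z = μ z * bd (idem wp wm) z) ↔
        ((wzbar (fun t => (starRingEnd ℂ) (wp t)) z
            = (starRingEnd ℂ) (plus (μ z)) * wz (fun t => (starRingEnd ℂ) (wp t)) z) ∧
         (wzbar wm z = minus (μ z) * wz wm z))) := by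
    intro z hz
    have hfp := (hwp z hz).hasFDerivAt
    have hfm := (hwm z hz).hasFDerivAt
    set Dp := fderiv ℝ wp z with hDpdef
    set Dm := fderiv ℝ wm z with hDmdef
    have hc1 : (fun t => (idem wp wm t).z1) = fun t => (1/2 : ℂ) * wp t + (1/2 : ℂ) * wm t := by
      funext t; simp [idem, pp, pm, ofC]
    have hc2 : (fun t => (idem wp wm t).z2)
        = fun t => (Complex.I/2) * wp t + (-(Complex.I/2)) * wm t := by
      funext t; simp [idem, pp, pm, ofC]
    have hd1 : HasFDerivAt (fun t => (idem wp wm t).z1)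
        ((1/2 : ℂ) • Dp + (1/2 : ℂ) • Dm) z := by
      rw [hc1]; exact (hfp.const_mul _).add (hfm.const_mul _)
    have hd2 : HasFDerivAt (fun t => (idem wp wm t).z2)
        ((Complex.I/2) • Dp + (-(Complex.I/2)) • Dm) z := by
      rw [hc2]; exact (hfp.const_mul _).add (hfm.const_mul _)
    have hdc : HasFDerivAt (fun t => (starRingEnd ℂ) (wp t))
        ((Complex.conjCLE.toContinuousLinearMap).comp Dp) z := by
      have h := (Complex.conjCLE.toContinuousLinearMap.hasFDerivAt (x := wp z)).comp z hfp
      exact h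
    have e1 := hd1.fderiv
    have e2 := hd2.fderiv
    have e3 := hdc.fderiv
    simp only [bdbar, bd, dx, dy, wz, wzbar, plus, minus, j, ofC, e1, e2, e3,
      ContinuousLinearMap.add_apply, ContinuousLinearMap.smul_apply, smul_eq_mul,
      ContinuousLinearMap.coe_comp', Function.comp_apply,
      ContinuousLinearEquiv.coe_coe, Complex.conjCLE_apply,
      beq_iff, mul_z1, mul_z2, add_z1, add_z2, sub_z1, sub_z2, neg_z1, neg_z2, zero_z1, zero_z2,
      map_add, map_sub, map_mul, map_div₀, map_neg, map_zero, map_one, map_ofNat, Complex.conj_I]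
    constructor
    · rintro ⟨h1, h2⟩
      have h1' := congrArg (starRingEnd ℂ) h1
      have h2' := congrArg (starRingEnd ℂ) h2
      simp only [map_add, map_sub, map_mul, map_div₀, map_neg, map_zero, map_one, map_ofNat,
        Complex.conj_I] at h1' h2'
      refine ⟨?_, ?_⟩
      · linear_combination h1' + Complex.I * h2'
          + ((1/4:ℂ)*((starRingEnd ℂ) (Dm Complex.I))*((starRingEnd ℂ) (μ z).z2)
            + (-1/4:ℂ)*((starRingEnd ℂ) (Dm 1))
            + (1/4:ℂ)*((starRingEnd ℂ) (Dm 1))*((starRingEnd ℂ) (μ z).z1)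
            + (1/4:ℂ)*((starRingEnd ℂ) (Dp Complex.I))*((starRingEnd ℂ) (μ z).z2)
            + (1/4:ℂ)*((starRingEnd ℂ) (Dp 1))
            + (-1/4:ℂ)*((starRingEnd ℂ) (Dp 1))*((starRingEnd ℂ) (μ z).z1)) * Complex.I_mul_I
      · linear_combination h1 + Complex.I * h2
          + ((1/4:ℂ)*(Dm Complex.I)*((μ z).z2) + (1/4:ℂ)*(Dm 1)
            + (-1/4:ℂ)*(Dm 1)*((μ z).z1) + (1/4:ℂ)*(Dp Complex.I)*((μ z).z2)
            + (-1/4:ℂ)*(Dp 1) + (1/4:ℂ)*(Dp 1)*((μ z).z1)) * Complex.I_mul_I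
    · rintro ⟨h1, h2⟩
      have h1' := congrArg (starRingEnd ℂ) h1
      simp only [map_add, map_sub, map_mul, map_div₀, map_neg, map_zero, map_one, map_ofNat,
        Complex.conj_I, Complex.conj_conj] at h1'
      refine ⟨?_, ?_⟩
      · linear_combination h1'/2 + h2/2
          + ((-1/4:ℂ)*(Dm Complex.I)*((μ z).z2)
            + (-1/4:ℂ)*(Dp Complex.I)*((μ z).z2)) * Complex.I_mul_I
      · linear_combination (-Complex.I/2) * (h2 - h1')
          + ((1/4:ℂ)*(Dm Complex.I) + (1/4:ℂ)*(Dm Complex.I)*((μ z).z1)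
            + (-1/4:ℂ)*(Dm 1)*((μ z).z2) + (1/4:ℂ)*(Dp Complex.I)
            + (1/4:ℂ)*(Dp Complex.I)*((μ z).z1) + (-1/4:ℂ)*(Dp 1)*((μ z).z2)
            + (1/4:ℂ)*Complex.I*(Dm Complex.I)*((μ z).z2)
            + (-1/4:ℂ)*Complex.I*(Dp Complex.I)*((μ z).z2)) * Complex.I_mul_I
  constructor
  · intro h
    exact ⟨fun z hz => ((main z hz).mp (h z hz)).1, fun z hz => ((main z hz).mp (h z hz)).2⟩
  · rintro ⟨h1, h2⟩ z hz
    exact (main z hz).mpr ⟨h1 z hz, h2 z hz⟩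

end
end

section
/- With μ : 𝔻 → 𝔹, ‖μ‖_{L^∞(𝔻,𝔹)} ≤ c < 1 and 0 < p < ∞, a function w = p⁺w⁺ + p⁻w⁻ belongs to the bicomplex Beltrami–Hardy space H^p_{Bel,μ}(𝔻,𝔹) (i.e. solves ∂̄w = μ∂w and sup_{0<r<1} ∫₀^{2π} ‖w(re^{iθ})‖_𝔹^p dθ < ∞) if and only if (w⁺)* ∈ H^p_{Bel,(μ⁺)*}(𝔻) and w⁻ ∈ H^p_{Bel,μ⁻}(𝔻). -/
open Complex MeasureTheory Metric Set Filter

noncomputable section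

open Bicomplex

-- AUX
namespace BAux
open Bicomplex

@[simp] lemma sub_z1 (u v : Bicomplex) : (u - v).z1 = u.z1 - v.z1 := by
  rw [sub_eq_add_neg, add_z1, neg_z1, ← sub_eq_add_neg]
@[simp] lemma sub_z2 (u v : Bicomplex) : (u - v).z2 = u.z2 - v.z2 := by
  rw [sub_eq_add_neg, add_z2, neg_z2, ← sub_eq_add_neg]

lemma pm_ext {u v : Bicomplex} (h1 : plus u = plus v) (h2 : minus u = minus v) : u = v := by
  simp only [plus, minus] at h1 h2
  have hz1 : u.z1 = v.z1 := by linear_combination (h1 + h2) / 2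
  have hz2 : Complex.I * u.z2 = Complex.I * v.z2 := by linear_combination (h2 - h1) / 2
  exact Bicomplex.ext' hz1 (mul_left_cancel₀ Complex.I_ne_zero hz2)

lemma plus_idem (wp wm : ℂ → ℂ) (t : ℂ) : plus (idem wp wm t) = wp t := by
  simp [idem, plus, pp, pm, ofC]; ring_nf; simp [Complex.I_sq]; ring

lemma minus_idem (wp wm : ℂ → ℂ) (t : ℂ) : minus (idem wp wm t) = wm t := by
  simp [idem, minus, pp, pm, ofC]; ring_nf; simp [Complex.I_sq]; ring

lemma fderiv_z1 (wp wm : ℂ → ℂ) (z : ℂ) (hp : DifferentiableAt ℝ wp z)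
    (hm : DifferentiableAt ℝ wm z) (v : ℂ) :
    fderiv ℝ (fun t => (idem wp wm t).z1) z v
      = (2:ℂ)⁻¹ * (fderiv ℝ wp z v + fderiv ℝ wm z v) := by
  have e : (fun t => (idem wp wm t).z1) = fun t => (2:ℂ)⁻¹ * (wp t + wm t) := by
    funext t; simp [idem, pp, pm, ofC]; ring
  rw [e, (show HasFDerivAt (fun t => (2:ℂ)⁻¹ * (wp t + wm t)) _ z from
    (hp.hasFDerivAt.add hm.hasFDerivAt).const_mul ((2:ℂ)⁻¹)).fderiv]
  simp; ring

lemma fderiv_z2 (wp wm : ℂ → ℂ) (z : ℂ) (hp : DifferentiableAt ℝ wp z)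
    (hm : DifferentiableAt ℝ wm z) (v : ℂ) :
    fderiv ℝ (fun t => (idem wp wm t).z2) z v
      = (Complex.I / 2) * (fderiv ℝ wp z v - fderiv ℝ wm z v) := by
  have e : (fun t => (idem wp wm t).z2) = fun t => (Complex.I / 2) * (wp t - wm t) := by
    funext t; simp [idem, pp, pm, ofC]; ring
  rw [e, (show HasFDerivAt (fun t => (Complex.I / 2) * (wp t - wm t)) _ z from
    (hp.hasFDerivAt.sub hm.hasFDerivAt).const_mul ((Complex.I / 2))).fderiv]
  simp

lemma bd_components (wp wm : ℂ → ℂ) (z : ℂ) (hp : DifferentiableAt ℝ wp z)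
    (hm : DifferentiableAt ℝ wm z) :
    plus (bd (idem wp wm) z) = wzbar wp z ∧
    plus (bdbar (idem wp wm) z) = wz wp z ∧
    minus (bd (idem wp wm) z) = wz wm z ∧
    minus (bdbar (idem wp wm) z) = wzbar wm z := by
  have h1 := fderiv_z1 wp wm z hp hm
  have h2 := fderiv_z2 wp wm z hp hm
  simp only [bd, bdbar, dx, dy, plus, minus, j, ofC, wz, wzbar, mul_z1, mul_z2, add_z1, add_z2,
    sub_z1, sub_z2, h1, h2]
  refine ⟨?_, ?_, ?_, ?_⟩ <;> (ring_nf; simp [Complex.I_sq]; ring)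

lemma fderiv_conj (f : ℂ → ℂ) (z : ℂ) (hf : DifferentiableAt ℝ f z) (v : ℂ) :
    fderiv ℝ (fun t => (starRingEnd ℂ) (f t)) z v = (starRingEnd ℂ) (fderiv ℝ f z v) := by
  have h : HasFDerivAt (fun t => (starRingEnd ℂ) (f t))
      ((Complex.conjCLE : ℂ ≃L[ℝ] ℂ).toContinuousLinearMap.comp (fderiv ℝ f z)) z :=
    ((Complex.conjCLE : ℂ ≃L[ℝ] ℂ).toContinuousLinearMap.hasFDerivAt).comp z hf.hasFDerivAt
  rw [h.fderiv]; simp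

lemma wz_conj (f : ℂ → ℂ) (z : ℂ) (hf : DifferentiableAt ℝ f z) :
    wz (fun t => (starRingEnd ℂ) (f t)) z = (starRingEnd ℂ) (wzbar f z) := by
  simp only [wz, wzbar, fderiv_conj f z hf, map_div₀, map_add, map_mul, Complex.conj_I]
  push_cast [map_ofNat]; ring

lemma wzbar_conj (f : ℂ → ℂ) (z : ℂ) (hf : DifferentiableAt ℝ f z) :
    wzbar (fun t => (starRingEnd ℂ) (f t)) z = (starRingEnd ℂ) (wz f z) := by
  simp only [wz, wzbar, fderiv_conj f z hf, map_div₀, map_sub, map_mul, Complex.conj_I]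
  push_cast [map_ofNat]; ring


lemma plus_mul (u v : Bicomplex) : plus (u * v) = plus u * plus v := by
  simp [plus]; ring_nf; simp [Complex.I_sq]; ring

lemma minus_mul (u v : Bicomplex) : minus (u * v) = minus u * minus v := by
  simp [minus]; ring_nf; simp [Complex.I_sq]; ring

lemma eq_iff (wp wm : ℂ → ℂ) (μ : ℂ → Bicomplex) (z : ℂ)
    (hp : DifferentiableAt ℝ wp z) (hm : DifferentiableAt ℝ wm z) :
    (bdbar (idem wp wm) z = μ z * bd (idem wp wm) z) ↔
    ((wzbar (fun t => (starRingEnd ℂ) (wp t)) z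
        = (starRingEnd ℂ) (plus (μ z)) * wz (fun t => (starRingEnd ℂ) (wp t)) z) ∧
     (wzbar wm z = minus (μ z) * wz wm z)) := by
  obtain ⟨c1, c2, c3, c4⟩ := bd_components wp wm z hp hm
  constructor
  · intro h
    have hplus : wz wp z = plus (μ z) * wzbar wp z := by
      have := congrArg plus h; rwa [c2, plus_mul, c1] at this
    have hminus : wzbar wm z = minus (μ z) * wz wm z := by
      have := congrArg minus h; rwa [c4, minus_mul, c3] at this
    refine ⟨?_, hminus⟩
    rw [wzbar_conj wp z hp, wz_conj wp z hp, hplus, map_mul]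
  · rintro ⟨h1, h2⟩
    apply pm_ext
    · rw [c2, plus_mul, c1]
      apply (starRingEnd ℂ).injective
      rw [map_mul, ← wzbar_conj wp z hp, ← wz_conj wp z hp]; exact h1
    · rw [c4, minus_mul, c3]; exact h2

lemma bnorm_idem (wp wm : ℂ → ℂ) (t : ℂ) :
    bnorm (idem wp wm t)
      = Real.sqrt ((‖wp t‖ ^ 2 + ‖wm t‖ ^ 2) / 2) := by
  rw [bnorm, plus_idem, minus_idem]

lemma circle_mem {r : ℝ} (hr : r ∈ Set.Ioo (0:ℝ) 1) (θ : ℝ) :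
    circleAt r θ ∈ ball (0:ℂ) 1 := by
  have : ‖circleAt r θ‖ = r := by
    simp [circleAt, map_mul, Complex.norm_exp_ofReal_mul_I, abs_of_pos hr.1]
  rw [mem_ball_zero_iff, this]; exact hr.2

lemma cont_circle (r : ℝ) : Continuous fun θ : ℝ => circleAt r θ := by
  unfold circleAt; fun_prop

lemma contC (f : ℂ → ℂ) (hf : ∀ z ∈ ball (0:ℂ) 1, DifferentiableAt ℝ f z)
    {r : ℝ} (hr : r ∈ Set.Ioo (0:ℝ) 1) :
    Continuous fun θ : ℝ => f (circleAt r θ) := by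
  rw [continuous_iff_continuousAt]; intro θ
  exact ((hf _ (circle_mem hr θ)).continuousAt).comp (cont_circle r).continuousAt

lemma cont_rpow {g : ℝ → ℝ} (hg : Continuous g) {p : ℝ} (hp : 0 ≤ p) :
    Continuous fun θ => g θ ^ p := by
  rw [continuous_iff_continuousAt]; intro θ
  exact (Real.continuousAt_rpow_const _ _ (Or.inr hp)).comp hg.continuousAt

lemma intC (f : ℂ → ℂ) (hf : ∀ z ∈ ball (0:ℂ) 1, DifferentiableAt ℝ f z)
    {r : ℝ} (hr : r ∈ Set.Ioo (0:ℝ) 1) {p : ℝ} (hp : 0 ≤ p) :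
    IntervalIntegrable (fun θ => ‖f (circleAt r θ)‖ ^ p)
      MeasureTheory.volume 0 (2 * Real.pi) :=
  (cont_rpow (continuous_norm.comp (contC f hf hr)) hp).intervalIntegrable _ _

lemma intB (wp wm : ℂ → ℂ)
    (hwp : ∀ z ∈ ball (0:ℂ) 1, DifferentiableAt ℝ wp z)
    (hwm : ∀ z ∈ ball (0:ℂ) 1, DifferentiableAt ℝ wm z)
    {r : ℝ} (hr : r ∈ Set.Ioo (0:ℝ) 1) {p : ℝ} (hp : 0 ≤ p) :
    IntervalIntegrable (fun θ => bnorm (idem wp wm (circleAt r θ)) ^ p)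
      MeasureTheory.volume 0 (2 * Real.pi) := by
  apply (cont_rpow ?_ hp).intervalIntegrable
  have : (fun θ : ℝ => bnorm (idem wp wm (circleAt r θ)))
      = fun θ => Real.sqrt ((‖wp (circleAt r θ)‖ ^ 2
          + ‖wm (circleAt r θ)‖ ^ 2) / 2) := by
    funext θ; rw [bnorm_idem]
  rw [this]
  exact Real.continuous_sqrt.comp ((((continuous_norm.comp (contC wp hwp hr)).pow 2).add
    ((continuous_norm.comp (contC wm hwm hr)).pow 2)).div_const 2)

lemma ineq1 {a b : ℝ} (ha : 0 ≤ a) (hb : 0 ≤ b) {p : ℝ} (hp : 0 ≤ p) :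
    a ^ p ≤ Real.sqrt 2 ^ p * Real.sqrt ((a ^ 2 + b ^ 2) / 2) ^ p := by
  rw [← Real.mul_rpow (Real.sqrt_nonneg 2) (Real.sqrt_nonneg _)]
  apply Real.rpow_le_rpow ha ?_ hp
  rw [← Real.sqrt_mul (by norm_num : (0:ℝ) ≤ 2)]
  calc a = Real.sqrt (a ^ 2) := (Real.sqrt_sq ha).symm
  _ ≤ _ := Real.sqrt_le_sqrt (by nlinarith)

lemma ineq2 {a b : ℝ} (ha : 0 ≤ a) (hb : 0 ≤ b) {p : ℝ} (hp : 0 ≤ p) :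
    Real.sqrt ((a ^ 2 + b ^ 2) / 2) ^ p ≤ a ^ p + b ^ p := by
  have hm : Real.sqrt ((a ^ 2 + b ^ 2) / 2) ≤ max a b := by
    rw [show max a b = Real.sqrt ((max a b) ^ 2) from
      (Real.sqrt_sq (le_max_of_le_left ha)).symm]
    apply Real.sqrt_le_sqrt
    rcases le_total a b with h | h
    · rw [max_eq_right h]; nlinarith
    · rw [max_eq_left h]; nlinarith
  calc Real.sqrt ((a ^ 2 + b ^ 2) / 2) ^ p ≤ (max a b) ^ p :=
        Real.rpow_le_rpow (Real.sqrt_nonneg _) hm hp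
  _ ≤ a ^ p + b ^ p := by
      rcases max_cases a b with ⟨he, _⟩ | ⟨he, _⟩ <;> rw [he]
      · exact le_add_of_nonneg_right (Real.rpow_nonneg hb p)
      · exact le_add_of_nonneg_left (Real.rpow_nonneg ha p)

lemma hardy_iff (p : ℝ) (hp : 0 < p) (wp wm : ℂ → ℂ)
    (hwp : ∀ z ∈ ball (0:ℂ) 1, DifferentiableAt ℝ wp z)
    (hwm : ∀ z ∈ ball (0:ℂ) 1, DifferentiableAt ℝ wm z) :
    HardyBddB p (idem wp wm) ↔
      (HardyBddC p (fun t => (starRingEnd ℂ) (wp t)) ∧ HardyBddC p wm) := by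
  have habs : ∀ r θ, ‖(starRingEnd ℂ) (wp (circleAt r θ))‖
      = ‖wp (circleAt r θ)‖ := fun r θ => Complex.norm_conj _
  have h2pi : (0:ℝ) ≤ 2 * Real.pi := by positivity
  constructor
  · rintro ⟨M, hM⟩
    constructor
    · refine ⟨Real.sqrt 2 ^ p * M, fun r hr => ?_⟩
      have key : (∫ θ in (0:ℝ)..(2 * Real.pi),
          ‖(starRingEnd ℂ) (wp (circleAt r θ))‖ ^ p)
          ≤ Real.sqrt 2 ^ p * ∫ θ in (0:ℝ)..(2 * Real.pi),
              bnorm (idem wp wm (circleAt r θ)) ^ p := by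
        rw [← intervalIntegral.integral_const_mul]
        apply intervalIntegral.integral_mono_on h2pi ?_ ?_
        · intro θ _
          rw [habs, bnorm_idem]
          exact ineq1 (norm_nonneg _) (norm_nonneg _) hp.le
        · simpa only [habs] using intC wp hwp hr hp.le
        · exact (intB wp wm hwp hwm hr hp.le).const_mul _
      exact key.trans (mul_le_mul_of_nonneg_left (hM r hr) (Real.rpow_nonneg (Real.sqrt_nonneg 2) p))
    · refine ⟨Real.sqrt 2 ^ p * M, fun r hr => ?_⟩
      have key : (∫ θ in (0:ℝ)..(2 * Real.pi), ‖wm (circleAt r θ)‖ ^ p)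
          ≤ Real.sqrt 2 ^ p * ∫ θ in (0:ℝ)..(2 * Real.pi),
              bnorm (idem wp wm (circleAt r θ)) ^ p := by
        rw [← intervalIntegral.integral_const_mul]
        apply intervalIntegral.integral_mono_on h2pi (intC wm hwm hr hp.le)
          ((intB wp wm hwp hwm hr hp.le).const_mul _)
        intro θ _
        rw [bnorm_idem]
        have := ineq1 (norm_nonneg (wm (circleAt r θ)))
          (norm_nonneg (wp (circleAt r θ))) hp.le
        calc ‖wm (circleAt r θ)‖ ^ p
            ≤ Real.sqrt 2 ^ p * Real.sqrt ((‖wm (circleAt r θ)‖ ^ 2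
                + ‖wp (circleAt r θ)‖ ^ 2) / 2) ^ p := this
        _ = _ := by rw [add_comm (‖wm (circleAt r θ)‖ ^ 2)]
      exact key.trans (mul_le_mul_of_nonneg_left (hM r hr) (Real.rpow_nonneg (Real.sqrt_nonneg 2) p))
  · rintro ⟨⟨M1, hM1⟩, ⟨M2, hM2⟩⟩
    refine ⟨M1 + M2, fun r hr => ?_⟩
    have key : (∫ θ in (0:ℝ)..(2 * Real.pi), bnorm (idem wp wm (circleAt r θ)) ^ p)
        ≤ (∫ θ in (0:ℝ)..(2 * Real.pi), ‖wp (circleAt r θ)‖ ^ p)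
          + ∫ θ in (0:ℝ)..(2 * Real.pi), ‖wm (circleAt r θ)‖ ^ p := by
      rw [← intervalIntegral.integral_add (intC wp hwp hr hp.le) (intC wm hwm hr hp.le)]
      apply intervalIntegral.integral_mono_on h2pi (intB wp wm hwp hwm hr hp.le)
        ((intC wp hwp hr hp.le).add (intC wm hwm hr hp.le))
      intro θ _
      rw [bnorm_idem]
      exact ineq2 (norm_nonneg _) (norm_nonneg _) hp.le
    have e1 : (∫ θ in (0:ℝ)..(2 * Real.pi), ‖wp (circleAt r θ)‖ ^ p) ≤ M1 := by
      have := hM1 r hr; simpa only [habs] using this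
    exact key.trans (add_le_add e1 (hM2 r hr))

end BAux

theorem stmt8 (p c : ℝ) (hp : 0 < p) (hc : c < 1) (μ : ℂ → Bicomplex)
    (hμ : ∀ z ∈ ball (0:ℂ) 1, bnorm (μ z) ≤ c)
    (wp wm : ℂ → ℂ)
    (hwp : ∀ z ∈ ball (0:ℂ) 1, DifferentiableAt ℝ wp z)
    (hwm : ∀ z ∈ ball (0:ℂ) 1, DifferentiableAt ℝ wm z) :
    ((∀ z ∈ ball (0:ℂ) 1, bdbar (idem wp wm) z = μ z * bd (idem wp wm) z) ∧
      HardyBddB p (idem wp wm)) ↔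
    (((∀ z ∈ ball (0:ℂ) 1,
        wzbar (fun t => (starRingEnd ℂ) (wp t)) z
          = (starRingEnd ℂ) (plus (μ z)) * wz (fun t => (starRingEnd ℂ) (wp t)) z) ∧
      HardyBddC p (fun t => (starRingEnd ℂ) (wp t))) ∧
     ((∀ z ∈ ball (0:ℂ) 1, wzbar wm z = minus (μ z) * wz wm z) ∧
      HardyBddC p wm)) := by
  constructor
  · rintro ⟨heq, hH⟩
    have hH' := (BAux.hardy_iff p hp wp wm hwp hwm).mp hH
    exact ⟨⟨fun z hz => ((BAux.eq_iff wp wm μ z (hwp z hz) (hwm z hz)).mp (heq z hz)).1, hH'.1⟩,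
      ⟨fun z hz => ((BAux.eq_iff wp wm μ z (hwp z hz) (hwm z hz)).mp (heq z hz)).2, hH'.2⟩⟩
  · rintro ⟨⟨h1, hHp⟩, ⟨h2, hHm⟩⟩
    exact ⟨fun z hz => (BAux.eq_iff wp wm μ z (hwp z hz) (hwm z hz)).mpr ⟨h1 z hz, h2 z hz⟩,
      (BAux.hardy_iff p hp wp wm hwp hwm).mpr ⟨hHp, hHm⟩⟩

end
end

section
/- If w = Σ_{k=0}^{n-1} (z*)^k w_k where each w_k solves ∂w_k/∂z* = μ ∂w_k/∂z (with μ sufficiently smooth), then for each 0 ≤ k ≤ n−1 the component is recovered by w_k = (1/k!) Σ_{j=0}^{n-1-k} ((-1)^j/j!) (z*)^j (∂/∂z* − μ∂/∂z)^{k+j} w. -/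
open Complex MeasureTheory Metric Set Filter

noncomputable section

open Bicomplex

theorem conj_hasFDerivAt (z : ℂ) :
    HasFDerivAt (starRingEnd ℂ) (Complex.conjCLE : ℂ →L[ℝ] ℂ) z := by
  have h := (Complex.conjCLE : ℂ →L[ℝ] ℂ).hasFDerivAt (x := z)
  convert h using 2
  funext x; simp

theorem diff_conj (z : ℂ) : DifferentiableAt ℝ (fun t : ℂ => (starRingEnd ℂ) t) z :=
  (conj_hasFDerivAt z).differentiableAt

theorem wzbar_congr {f g : ℂ → ℂ} {z : ℂ} (h : f =ᶠ[nhds z] g) : wzbar f z = wzbar g z := by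
  unfold wzbar; rw [Filter.EventuallyEq.fderiv_eq h]

theorem wz_congr {f g : ℂ → ℂ} {z : ℂ} (h : f =ᶠ[nhds z] g) : wz f z = wz g z := by
  unfold wz; rw [Filter.EventuallyEq.fderiv_eq h]

theorem wzbar_sum {s : Finset ℕ} {f : ℕ → ℂ → ℂ} {z : ℂ}
    (h : ∀ m ∈ s, DifferentiableAt ℝ (f m) z) :
    wzbar (fun t => ∑ m ∈ s, f m t) z = ∑ m ∈ s, wzbar (f m) z := by
  unfold wzbar
  rw [fderiv_fun_sum h]
  simp only [ContinuousLinearMap.coe_sum', Finset.sum_apply, Finset.mul_sum,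
    ← Finset.sum_add_distrib, Finset.sum_div]

theorem wz_sum {s : Finset ℕ} {f : ℕ → ℂ → ℂ} {z : ℂ}
    (h : ∀ m ∈ s, DifferentiableAt ℝ (f m) z) :
    wz (fun t => ∑ m ∈ s, f m t) z = ∑ m ∈ s, wz (f m) z := by
  unfold wz
  rw [fderiv_fun_sum h]
  simp only [ContinuousLinearMap.coe_sum', Finset.sum_apply, Finset.mul_sum,
    ← Finset.sum_sub_distrib, Finset.sum_div]

theorem wzbar_mul {f g : ℂ → ℂ} {z : ℂ} (hf : DifferentiableAt ℝ f z)
    (hg : DifferentiableAt ℝ g z) :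
    wzbar (fun t => f t * g t) z = wzbar f z * g z + f z * wzbar g z := by
  unfold wzbar
  rw [fderiv_fun_mul hf hg]
  simp only [ContinuousLinearMap.add_apply, ContinuousLinearMap.smul_apply, smul_eq_mul]
  ring

theorem wz_mul {f g : ℂ → ℂ} {z : ℂ} (hf : DifferentiableAt ℝ f z)
    (hg : DifferentiableAt ℝ g z) :
    wz (fun t => f t * g t) z = wz f z * g z + f z * wz g z := by
  unfold wz
  rw [fderiv_fun_mul hf hg]
  simp only [ContinuousLinearMap.add_apply, ContinuousLinearMap.smul_apply, smul_eq_mul]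
  ring

theorem wzbar_const (c : ℂ) (z : ℂ) : wzbar (fun _ => c) z = 0 := by
  unfold wzbar; simp

theorem wz_const (c : ℂ) (z : ℂ) : wz (fun _ => c) z = 0 := by
  unfold wz; simp

theorem wzbar_const_mul {g : ℂ → ℂ} {z : ℂ} (c : ℂ) (hg : DifferentiableAt ℝ g z) :
    wzbar (fun t => c * g t) z = c * wzbar g z := by
  rw [wzbar_mul (differentiableAt_const c) hg, wzbar_const]; ring

theorem wz_const_mul {g : ℂ → ℂ} {z : ℂ} (c : ℂ) (hg : DifferentiableAt ℝ g z) :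
    wz (fun t => c * g t) z = c * wz g z := by
  rw [wz_mul (differentiableAt_const c) hg, wz_const]; ring

theorem wzbar_conj (z : ℂ) : wzbar (fun t => (starRingEnd ℂ) t) z = 1 := by
  unfold wzbar
  rw [(conj_hasFDerivAt z).fderiv]
  simp

theorem wz_conj (z : ℂ) : wz (fun t => (starRingEnd ℂ) t) z = 0 := by
  unfold wz
  rw [(conj_hasFDerivAt z).fderiv]
  simp

theorem diff_conj_pow (p : ℕ) (z : ℂ) :
    DifferentiableAt ℝ (fun t : ℂ => (starRingEnd ℂ) t ^ p) z :=
  (diff_conj z).pow p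

theorem wzbar_conj_pow (p : ℕ) (z : ℂ) :
    wzbar (fun t => (starRingEnd ℂ) t ^ p) z = p * (starRingEnd ℂ) z ^ (p - 1) := by
  induction p with
  | zero => simpa using wzbar_const 1 z
  | succ p ih =>
    have : (fun t => (starRingEnd ℂ) t ^ (p + 1)) = fun t => (starRingEnd ℂ) t ^ p * (starRingEnd ℂ) t := by
      funext t; ring
    rw [this, wzbar_mul (diff_conj_pow p z) (diff_conj z), ih, wzbar_conj]
    cases p with
    | zero => push_cast; ring_nf
    | succ q =>
      simp only [Nat.succ_sub_one]
      push_cast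
      rw [pow_succ]
      ring

theorem wz_conj_pow (p : ℕ) (z : ℂ) :
    wz (fun t => (starRingEnd ℂ) t ^ p) z = 0 := by
  induction p with
  | zero => simpa using wz_const 1 z
  | succ p ih =>
    have : (fun t => (starRingEnd ℂ) t ^ (p + 1)) = fun t => (starRingEnd ℂ) t ^ p * (starRingEnd ℂ) t := by
      funext t; ring
    rw [this, wz_mul (diff_conj_pow p z) (diff_conj z), ih, wz_conj]
    ring

theorem descFactorial_add' (m k : ℕ) : ∀ i : ℕ,
    m.descFactorial (k + i) = m.descFactorial k * (m - k).descFactorial i := by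
  intro i
  induction i with
  | zero => simp
  | succ i ih =>
    rw [← Nat.add_assoc, Nat.descFactorial_succ, Nat.descFactorial_succ, ih, ← Nat.sub_sub]
    ring

theorem alt_sum_choose_complex (p : ℕ) :
    (∑ i ∈ Finset.range (p + 1), ((-1 : ℂ) ^ i * (p.choose i : ℂ))) =
      if p = 0 then 1 else 0 := by
  have h := Int.alternating_sum_range_choose (n := p)
  have : ((∑ m ∈ Finset.range (p + 1), ((-1) ^ m * p.choose m : ℤ) : ℤ) : ℂ) =
      ∑ i ∈ Finset.range (p + 1), ((-1 : ℂ) ^ i * (p.choose i : ℂ)) := by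
    push_cast; rfl
  rw [← this, h]
  split <;> simp

theorem iter_formula (n : ℕ) (μ : ℂ → ℂ) (wk : ℕ → ℂ → ℂ)
    (hdiff : ∀ m < n, ∀ z ∈ ball (0:ℂ) 1, DifferentiableAt ℝ (wk m) z)
    (hbel : ∀ m < n, ∀ z ∈ ball (0:ℂ) 1, wzbar (wk m) z = μ z * wz (wk m) z) :
    ∀ j : ℕ, ∀ z ∈ ball (0:ℂ) 1,
      (belOp μ)^[j] (fun t => ∑ m ∈ Finset.range n, (starRingEnd ℂ) t ^ m * wk m t) z =
        ∑ m ∈ Finset.range n,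
          (m.descFactorial j : ℂ) * ((starRingEnd ℂ) z ^ (m - j) * wk m z) := by
  intro j
  induction j with
  | zero =>
    intro z hz
    simp
  | succ j ih =>
    intro z hz
    rw [Function.iterate_succ_apply']
    have hEq : (belOp μ)^[j] (fun t => ∑ m ∈ Finset.range n, (starRingEnd ℂ) t ^ m * wk m t)
        =ᶠ[nhds z] (fun t => ∑ m ∈ Finset.range n,
          (m.descFactorial j : ℂ) * ((starRingEnd ℂ) t ^ (m - j) * wk m t)) :=
      Filter.eventually_of_mem (isOpen_ball.mem_nhds hz) (fun t ht => ih t ht)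
    have hdm : ∀ m ∈ Finset.range n, DifferentiableAt ℝ
        (fun t => (m.descFactorial j : ℂ) * ((starRingEnd ℂ) t ^ (m - j) * wk m t)) z := by
      intro m hm
      exact ((diff_conj_pow (m - j) z).mul (hdiff m (Finset.mem_range.mp hm) z hz)).const_mul _
    simp only [belOp]
    rw [wzbar_congr hEq, wz_congr hEq, wzbar_sum hdm, wz_sum hdm, Finset.mul_sum,
      ← Finset.sum_sub_distrib]
    refine Finset.sum_congr rfl (fun m hm => ?_)
    have hw := hdiff m (Finset.mem_range.mp hm) z hz
    rw [wzbar_const_mul _ (show DifferentiableAt ℝ (fun t => (starRingEnd ℂ) t ^ (m - j) * wk m t) z from (diff_conj_pow (m - j) z).mul hw),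
        wz_const_mul _ (show DifferentiableAt ℝ (fun t => (starRingEnd ℂ) t ^ (m - j) * wk m t) z from (diff_conj_pow (m - j) z).mul hw),
        wzbar_mul (diff_conj_pow (m - j) z) hw, wz_mul (diff_conj_pow (m - j) z) hw,
        wzbar_conj_pow, wz_conj_pow, hbel m (Finset.mem_range.mp hm) z hz]
    rw [Nat.descFactorial_succ]
    have hexp : m - (j + 1) = (m - j) - 1 := by omega
    rw [hexp]
    push_cast
    ring

theorem final (n : ℕ) (hn : 1 ≤ n) (μ : ℂ → ℂ) (wk : ℕ → ℂ → ℂ)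
    (hdiff : ∀ m < n, ∀ z ∈ ball (0:ℂ) 1, DifferentiableAt ℝ (wk m) z)
    (hbel : ∀ m < n, ∀ z ∈ ball (0:ℂ) 1, wzbar (wk m) z = μ z * wz (wk m) z) :
    ∀ k < n, ∀ z ∈ ball (0:ℂ) 1,
      wk k z = (k.factorial : ℂ)⁻¹ *
        ∑ i ∈ Finset.range (n - k),
          ((-1 : ℂ) ^ i / (i.factorial : ℂ)) * (starRingEnd ℂ z) ^ i *
            (belOp μ)^[k + i]
              (fun t => ∑ m ∈ Finset.range n, (starRingEnd ℂ t) ^ m * wk m t) z := by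
  intro k hk z hz
  have hiter := iter_formula n μ wk hdiff hbel
  have hrw : ∀ i ∈ Finset.range (n - k),
      ((-1 : ℂ) ^ i / (i.factorial : ℂ)) * (starRingEnd ℂ z) ^ i *
        (belOp μ)^[k + i]
          (fun t => ∑ m ∈ Finset.range n, (starRingEnd ℂ t) ^ m * wk m t) z
      = ∑ m ∈ Finset.range n, ((-1 : ℂ) ^ i / (i.factorial : ℂ)) * (starRingEnd ℂ z) ^ i *
          ((m.descFactorial (k + i) : ℂ) * ((starRingEnd ℂ z) ^ (m - (k + i)) * wk m z)) := by
    intro i hi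
    rw [hiter (k + i) z hz, Finset.mul_sum]
  rw [Finset.sum_congr rfl hrw, Finset.sum_comm]
  have hmain : ∀ m ∈ Finset.range n,
      (∑ i ∈ Finset.range (n - k), ((-1 : ℂ) ^ i / (i.factorial : ℂ)) * (starRingEnd ℂ z) ^ i *
          ((m.descFactorial (k + i) : ℂ) * ((starRingEnd ℂ z) ^ (m - (k + i)) * wk m z)))
      = if m = k then (k.factorial : ℂ) * wk k z else 0 := by
    intro m hm
    have hmn := Finset.mem_range.mp hm
    by_cases hmk : m < k
    · rw [if_neg (by omega)]
      refine Finset.sum_eq_zero (fun i hi => ?_)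
      have : m.descFactorial (k + i) = 0 :=
        Nat.descFactorial_eq_zero_iff_lt.mpr (by omega)
      rw [this]
      push_cast
      ring
    · push_neg at hmk
      set p := m - k with hp
      have hsub : Finset.range (p + 1) ⊆ Finset.range (n - k) := by
        apply Finset.range_subset_range.mpr; omega
      rw [← Finset.sum_subset hsub (fun i hi hni => ?_)]
      · have hterm : ∀ i ∈ Finset.range (p + 1),
            ((-1 : ℂ) ^ i / (i.factorial : ℂ)) * (starRingEnd ℂ z) ^ i *
              ((m.descFactorial (k + i) : ℂ) * ((starRingEnd ℂ z) ^ (m - (k + i)) * wk m z))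
            = ((m.descFactorial k : ℂ) * (starRingEnd ℂ z) ^ p * wk m z) *
                ((-1 : ℂ) ^ i * (p.choose i : ℂ)) := by
          intro i hi
          have hip : i ≤ p := Nat.lt_succ_iff.mp (Finset.mem_range.mp hi)
          rw [descFactorial_add' m k i, ← hp, Nat.descFactorial_eq_factorial_mul_choose p i]
          have h1 : m - (k + i) = p - i := by omega
          rw [h1]
          have h2 : (starRingEnd ℂ z) ^ i * (starRingEnd ℂ z) ^ (p - i) =
              (starRingEnd ℂ z) ^ p := by
            rw [← pow_add]; congr 1; omega
          have hfac : (i.factorial : ℂ) ≠ 0 := Nat.cast_ne_zero.mpr i.factorial_ne_zero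
          calc ((-1 : ℂ) ^ i / (i.factorial : ℂ)) * (starRingEnd ℂ z) ^ i *
              (((m.descFactorial k * (i.factorial * p.choose i) : ℕ) : ℂ) *
                ((starRingEnd ℂ z) ^ (p - i) * wk m z))
              = ((-1 : ℂ) ^ i * (p.choose i : ℂ)) * ((m.descFactorial k : ℂ) * wk m z) *
                  ((i.factorial : ℂ) / (i.factorial : ℂ)) *
                  ((starRingEnd ℂ z) ^ i * (starRingEnd ℂ z) ^ (p - i)) := by
                push_cast; ring
            _ = _ := by rw [div_self hfac, h2]; ring
        rw [Finset.sum_congr rfl hterm, ← Finset.mul_sum, alt_sum_choose_complex]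
        by_cases hpk : m = k
        · rw [if_pos hpk]
          subst hpk
          simp [hp, Nat.descFactorial_self]
        · rw [if_neg hpk, if_neg (by omega)]
          ring
      · have : m.descFactorial (k + i) = 0 := by
          apply Nat.descFactorial_eq_zero_iff_lt.mpr
          have := Finset.mem_range.not.mp hni
          omega
        rw [this]
        push_cast
        ring
  rw [Finset.sum_congr rfl hmain, Finset.sum_ite_eq' (Finset.range n) k
    (fun _ => (k.factorial : ℂ) * wk k z), if_pos (Finset.mem_range.mpr hk),
    ← mul_assoc, inv_mul_cancel₀ (Nat.cast_ne_zero.mpr k.factorial_ne_zero), one_mul]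

theorem stmt11 (n : ℕ) (hn : 1 ≤ n) (c : ℝ) (hc : c < 1) (μ : ℂ → ℂ)
    (hμs : ContDiffOn ℝ (n - 1 : ℕ) μ (ball (0:ℂ) 1))
    (hμb : ∀ z ∈ ball (0:ℂ) 1, ‖μ z‖ ≤ c)
    (wk : ℕ → ℂ → ℂ)
    (hks : ∀ k < n, ContDiffOn ℝ (n : ℕ) (wk k) (ball (0:ℂ) 1))
    (hkb : ∀ k < n, ∀ z ∈ ball (0:ℂ) 1, wzbar (wk k) z = μ z * wz (wk k) z) :
    ∀ k < n, ∀ z ∈ ball (0:ℂ) 1,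
      wk k z = (k.factorial : ℂ)⁻¹ *
        ∑ i ∈ Finset.range (n - k),
          ((-1 : ℂ) ^ i / (i.factorial : ℂ)) * (starRingEnd ℂ z) ^ i *
            (belOp μ)^[k + i]
              (fun t => ∑ m ∈ Finset.range n, (starRingEnd ℂ t) ^ m * wk m t) z := by
  have hdiff : ∀ m < n, ∀ z ∈ ball (0:ℂ) 1, DifferentiableAt ℝ (wk m) z := by
    intro m hm z hz
    exact ((hks m hm).differentiableOn (by exact_mod_cast (show n ≠ 0 by omega))).differentiableAt
      (isOpen_ball.mem_nhds hz)
  exact final n hn μ wk hdiff hkb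

end
end

section
/- If w = Σ_{k=0}^{n-1} (ẑ*)^k w_k with each w_k solving the bicomplex Beltrami equation ∂̄w_k = μ∂w_k, then the components satisfy w_k = (1/k!) Σ_{j=0}^{n-1-k} ((-1)^j/j!) (ẑ*)^j (∂̄ − μ∂)^{k+j} w for every 0 ≤ k ≤ n−1. -/
open Complex MeasureTheory Metric Set Filter

noncomputable section

open Bicomplex
namespace BicomplexAux

open Bicomplex Metric

/-! ### ofC API -/

theorem ofC_add (a b : ℂ) : ofC (a + b) = ofC a + ofC b := by ext <;> simp [ofC]
theorem ofC_mul (a b : ℂ) : ofC (a * b) = ofC a * ofC b := by ext <;> simp [ofC]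
theorem ofC_zero : ofC 0 = 0 := by ext <;> simp [ofC]
theorem ofC_one : ofC 1 = 1 := by ext <;> simp [ofC]
theorem ofC_sum {ι : Type*} (s : Finset ι) (f : ι → ℂ) :
    ofC (∑ i ∈ s, f i) = ∑ i ∈ s, ofC (f i) := by
  induction s using Finset.cons_induction with
  | empty => simp [ofC_zero]
  | cons a s ha ih => rw [Finset.sum_cons, Finset.sum_cons, ofC_add, ih]

theorem sum_z1 {ι : Type*} (s : Finset ι) (f : ι → Bicomplex) :
    (∑ i ∈ s, f i).z1 = ∑ i ∈ s, (f i).z1 := by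
  induction s using Finset.cons_induction with
  | empty => simp
  | cons a s ha ih => rw [Finset.sum_cons, Finset.sum_cons, add_z1, ih]

theorem sum_z2 {ι : Type*} (s : Finset ι) (f : ι → Bicomplex) :
    (∑ i ∈ s, f i).z2 = ∑ i ∈ s, (f i).z2 := by
  induction s using Finset.cons_induction with
  | empty => simp
  | cons a s ha ih => rw [Finset.sum_cons, Finset.sum_cons, add_z2, ih]

/-! ### directional derivative -/

noncomputable def dv (v : ℂ) (f : ℂ → Bicomplex) (z : ℂ) : Bicomplex :=
  ⟨fderiv ℝ (fun t => (f t).z1) z v, fderiv ℝ (fun t => (f t).z2) z v⟩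

theorem bd_eq (f : ℂ → Bicomplex) (z : ℂ) :
    bd f z = ofC (1 / 2) * (dv 1 f z - j * dv Complex.I f z) := rfl

theorem bdbar_eq (f : ℂ → Bicomplex) (z : ℂ) :
    bdbar f z = ofC (1 / 2) * (dv 1 f z + j * dv Complex.I f z) := rfl

theorem fderivR_mul {a b : ℂ → ℂ} {z : ℂ} (ha : DifferentiableAt ℝ a z)
    (hb : DifferentiableAt ℝ b z) (v : ℂ) :
    fderiv ℝ (fun t => a t * b t) z v = fderiv ℝ a z v * b z + a z * fderiv ℝ b z v := by
  rw [fderiv_fun_mul ha hb]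
  simp only [ContinuousLinearMap.add_apply, ContinuousLinearMap.smul_apply, smul_eq_mul]
  ring

theorem BDiffAt_const (C : Bicomplex) (z : ℂ) : BDiffAt (fun _ => C) z :=
  ⟨differentiableAt_const _, differentiableAt_const _⟩

theorem BDiffAt.mul' {f g : ℂ → Bicomplex} {z : ℂ} (hf : BDiffAt f z) (hg : BDiffAt g z) :
    BDiffAt (fun t => f t * g t) z := by
  constructor
  · simp only [mul_z1]
    exact (hf.1.mul hg.1).sub (hf.2.mul hg.2)
  · simp only [mul_z2]
    exact (hf.1.mul hg.2).add (hf.2.mul hg.1)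

theorem dv_const (v : ℂ) (C : Bicomplex) (z : ℂ) : dv v (fun _ => C) z = 0 := by
  ext <;> simp [dv]

theorem dv_mul {f g : ℂ → Bicomplex} {z : ℂ} (v : ℂ) (hf : BDiffAt f z) (hg : BDiffAt g z) :
    dv v (fun t => f t * g t) z = dv v f z * g z + f z * dv v g z := by
  ext
  · show fderiv ℝ (fun t => (f t * g t).z1) z v = _
    simp only [mul_z1]
    rw [fderiv_fun_sub (f := fun t => (f t).z1 * (g t).z1) (g := fun t => (f t).z2 * (g t).z2)
      (hf.1.mul hg.1) (hf.2.mul hg.2)]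
    simp only [ContinuousLinearMap.sub_apply]
    rw [fderivR_mul hf.1 hg.1, fderivR_mul hf.2 hg.2]
    simp only [add_z1, mul_z1, dv]
    ring
  · show fderiv ℝ (fun t => (f t * g t).z2) z v = _
    simp only [mul_z2]
    rw [fderiv_fun_add (f := fun t => (f t).z1 * (g t).z2) (g := fun t => (f t).z2 * (g t).z1)
      (hf.1.mul hg.2) (hf.2.mul hg.1)]
    simp only [ContinuousLinearMap.add_apply]
    rw [fderivR_mul hf.1 hg.2, fderivR_mul hf.2 hg.1]
    simp only [add_z2, mul_z2, dv]
    ring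

theorem dv_sum {ι : Type*} {z : ℂ} (v : ℂ) (s : Finset ι) (F : ι → ℂ → Bicomplex)
    (h : ∀ m ∈ s, BDiffAt (F m) z) :
    dv v (fun t => ∑ m ∈ s, F m t) z = ∑ m ∈ s, dv v (F m) z := by
  ext
  · show fderiv ℝ (fun t => (∑ m ∈ s, F m t).z1) z v = _
    simp only [sum_z1]
    rw [fderiv_fun_sum (fun m hm => (h m hm).1)]
    simp [dv, sum_z1]
  · show fderiv ℝ (fun t => (∑ m ∈ s, F m t).z2) z v = _
    simp only [sum_z2]
    rw [fderiv_fun_sum (fun m hm => (h m hm).2)]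
    simp [dv, sum_z2]

end BicomplexAux
namespace BicomplexAux

open Bicomplex Metric

theorem bd_mul {f g : ℂ → Bicomplex} {z : ℂ} (hf : BDiffAt f z) (hg : BDiffAt g z) :
    bd (fun t => f t * g t) z = bd f z * g z + f z * bd g z := by
  rw [bd_eq, bd_eq, bd_eq, dv_mul 1 hf hg, dv_mul Complex.I hf hg]
  ring

theorem bdbar_mul {f g : ℂ → Bicomplex} {z : ℂ} (hf : BDiffAt f z) (hg : BDiffAt g z) :
    bdbar (fun t => f t * g t) z = bdbar f z * g z + f z * bdbar g z := by
  rw [bdbar_eq, bdbar_eq, bdbar_eq, dv_mul 1 hf hg, dv_mul Complex.I hf hg]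
  ring

theorem bd_sum {ι : Type*} {z : ℂ} (s : Finset ι) (F : ι → ℂ → Bicomplex)
    (h : ∀ m ∈ s, BDiffAt (F m) z) :
    bd (fun t => ∑ m ∈ s, F m t) z = ∑ m ∈ s, bd (F m) z := by
  rw [bd_eq, dv_sum 1 s F h, dv_sum Complex.I s F h, Finset.mul_sum, ← Finset.sum_sub_distrib,
    Finset.mul_sum]
  exact Finset.sum_congr rfl fun m _ => (bd_eq (F m) z).symm

theorem bdbar_sum {ι : Type*} {z : ℂ} (s : Finset ι) (F : ι → ℂ → Bicomplex)
    (h : ∀ m ∈ s, BDiffAt (F m) z) :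
    bdbar (fun t => ∑ m ∈ s, F m t) z = ∑ m ∈ s, bdbar (F m) z := by
  rw [bdbar_eq, dv_sum 1 s F h, dv_sum Complex.I s F h, Finset.mul_sum, ← Finset.sum_add_distrib,
    Finset.mul_sum]
  exact Finset.sum_congr rfl fun m _ => (bdbar_eq (F m) z).symm

theorem bd_const (C : Bicomplex) (z : ℂ) : bd (fun _ => C) z = 0 := by
  rw [bd_eq, dv_const, dv_const]; ring

theorem bdbar_const (C : Bicomplex) (z : ℂ) : bdbar (fun _ => C) z = 0 := by
  rw [bdbar_eq, dv_const, dv_const]; ring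

/-! ### hatStar -/

theorem fderiv_re (z v : ℂ) : fderiv ℝ (fun t : ℂ => ((t.re : ℝ) : ℂ)) z v = (v.re : ℂ) := by
  rw [show (fun t : ℂ => ((t.re : ℝ) : ℂ)) = ⇑(Complex.ofRealCLM.comp Complex.reCLM) from rfl,
    ContinuousLinearMap.fderiv]
  rfl

theorem fderiv_im (z v : ℂ) : fderiv ℝ (fun t : ℂ => ((t.im : ℝ) : ℂ)) z v = (v.im : ℂ) := by
  rw [show (fun t : ℂ => ((t.im : ℝ) : ℂ)) = ⇑(Complex.ofRealCLM.comp Complex.imCLM) from rfl,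
    ContinuousLinearMap.fderiv]
  rfl

theorem BDiffAt_hatStar (z : ℂ) : BDiffAt hatStar z := by
  constructor
  · exact (Complex.ofRealCLM.comp Complex.reCLM).differentiableAt
  · show DifferentiableAt ℝ (fun t : ℂ => -((t.im : ℝ) : ℂ)) z
    exact ((Complex.ofRealCLM.comp Complex.imCLM).differentiableAt).neg

theorem dv_hatStar (v z : ℂ) : dv v hatStar z = ⟨(v.re : ℂ), -(v.im : ℂ)⟩ := by
  ext
  · show fderiv ℝ (fun t : ℂ => ((t.re : ℝ) : ℂ)) z v = (v.re : ℂ)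
    exact fderiv_re z v
  · show fderiv ℝ (fun t : ℂ => -((t.im : ℝ) : ℂ)) z v = -(v.im : ℂ)
    rw [fderiv_fun_neg]
    simp only [ContinuousLinearMap.neg_apply, fderiv_im, neg_inj]

theorem bd_hatStar (z : ℂ) : bd hatStar z = 0 := by
  rw [bd_eq, dv_hatStar, dv_hatStar]
  ext <;> simp [sub_eq_add_neg, j, ofC] <;> norm_num

theorem bdbar_hatStar (z : ℂ) : bdbar hatStar z = 1 := by
  rw [bdbar_eq, dv_hatStar, dv_hatStar]
  ext <;> simp [sub_eq_add_neg, j, ofC] <;> norm_num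

theorem BDiffAt_hatStar_pow (q : ℕ) (z : ℂ) : BDiffAt (fun t => hatStar t ^ q) z := by
  induction q with
  | zero =>
    simp only [pow_zero]
    exact BDiffAt_const 1 z
  | succ q ih =>
    simp only [pow_succ]
    exact BDiffAt.mul' ih (BDiffAt_hatStar z)

theorem bd_hatStar_pow (q : ℕ) (z : ℂ) : bd (fun t => hatStar t ^ q) z = 0 := by
  induction q with
  | zero => simpa only [pow_zero] using bd_const 1 z
  | succ q ih =>
    have := bd_mul (BDiffAt_hatStar_pow q z) (BDiffAt_hatStar z)
    simp only [← pow_succ] at this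
    rw [this, ih, bd_hatStar, zero_mul, mul_zero, add_zero]

theorem bdbar_hatStar_pow (q : ℕ) (z : ℂ) :
    bdbar (fun t => hatStar t ^ q) z = ofC (q : ℂ) * hatStar z ^ (q - 1) := by
  induction q with
  | zero =>
    simp only [Nat.cast_zero, ofC_zero, zero_mul]
    simpa only [pow_zero] using bdbar_const 1 z
  | succ q ih =>
    have := bdbar_mul (BDiffAt_hatStar_pow q z) (BDiffAt_hatStar z)
    simp only [← pow_succ] at this
    rw [this, ih, bdbar_hatStar, mul_one]
    cases q with
    | zero => simp [ofC_zero, ofC_one]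
    | succ q =>
      have hq : q + 1 - 1 = q := rfl
      have hq2 : q + 1 + 1 - 1 = q + 1 := rfl
      rw [hq, hq2, pow_succ]
      have : ofC ((q + 1 + 1 : ℕ) : ℂ) = ofC ((q + 1 : ℕ) : ℂ) + 1 := by
        push_cast
        rw [ofC_add, ofC_one]
      rw [this]
      ring

end BicomplexAux
namespace BicomplexAux

open Bicomplex Metric

theorem bbelOp_def (μ f : ℂ → Bicomplex) (z : ℂ) :
    bbelOp μ f z = bdbar f z - μ z * bd f z := rfl

theorem bbelOp_sum {ι : Type*} {z : ℂ} (μ : ℂ → Bicomplex) (s : Finset ι)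
    (F : ι → ℂ → Bicomplex) (h : ∀ m ∈ s, BDiffAt (F m) z) :
    bbelOp μ (fun t => ∑ m ∈ s, F m t) z = ∑ m ∈ s, bbelOp μ (F m) z := by
  rw [bbelOp_def, bd_sum s F h, bdbar_sum s F h, Finset.mul_sum, ← Finset.sum_sub_distrib]
  rfl

theorem bbelOp_term {z : ℂ} (μ : ℂ → Bicomplex) (c : ℂ) (e : ℕ) (f : ℂ → Bicomplex)
    (hf : BDiffAt f z) :
    bbelOp μ (fun t => ofC c * hatStar t ^ e * f t) z
      = ofC (c * e) * hatStar z ^ (e - 1) * f z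
        + ofC c * hatStar z ^ e * (bdbar f z - μ z * bd f z) := by
  have hg : BDiffAt (fun t => ofC c * hatStar t ^ e) z :=
    BDiffAt.mul' (BDiffAt_const (ofC c) z) (BDiffAt_hatStar_pow e z)
  have hgc : bd (fun t => ofC c * hatStar t ^ e) z = 0 := by
    have := bd_mul (BDiffAt_const (ofC c) z) (BDiffAt_hatStar_pow e z)
    rw [this, bd_const, bd_hatStar_pow, zero_mul, mul_zero, add_zero]
  have hgb : bdbar (fun t => ofC c * hatStar t ^ e) z = ofC c * (ofC (e : ℂ) * hatStar z ^ (e - 1)) := by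
    have := bdbar_mul (BDiffAt_const (ofC c) z) (BDiffAt_hatStar_pow e z)
    rw [this, bdbar_const, bdbar_hatStar_pow, zero_mul, zero_add]
  have hmul := bd_mul hg hf
  have hmulb := bdbar_mul hg hf
  rw [bbelOp_def, hmul, hmulb, hgc, hgb, ofC_mul]
  ring

theorem bbelOp_congr {μ f g : ℂ → Bicomplex} {s : Set ℂ} (hs : IsOpen s)
    (h : ∀ x ∈ s, f x = g x) {z : ℂ} (hz : z ∈ s) : bbelOp μ f z = bbelOp μ g z := by
  have h1 : (fun t => (f t).z1) =ᶠ[nhds z] fun t => (g t).z1 :=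
    Filter.eventuallyEq_of_mem (hs.mem_nhds hz) (fun x hx => by rw [h x hx])
  have h2 : (fun t => (f t).z2) =ᶠ[nhds z] fun t => (g t).z2 :=
    Filter.eventuallyEq_of_mem (hs.mem_nhds hz) (fun x hx => by rw [h x hx])
  have e1 : fderiv ℝ (fun t => (f t).z1) z = fderiv ℝ (fun t => (g t).z1) z := h1.fderiv_eq
  have e2 : fderiv ℝ (fun t => (f t).z2) z = fderiv ℝ (fun t => (g t).z2) z := h2.fderiv_eq
  have hdv : ∀ v : ℂ, dv v f z = dv v g z := by
    intro v; ext
    · show (fderiv ℝ (fun t => (f t).z1) z) v = _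
      rw [e1]; rfl
    · show (fderiv ℝ (fun t => (f t).z2) z) v = _
      rw [e2]; rfl
  rw [bbelOp_def, bbelOp_def, bd_eq, bd_eq, bdbar_eq, bdbar_eq, hdv 1, hdv Complex.I]

theorem iter_formula (n : ℕ) (hn : 1 ≤ n) (μ : ℂ → Bicomplex) (wk : ℕ → ℂ → Bicomplex)
    (hks : ∀ k < n, BContDiffOn (n : ℕ) (wk k) (ball (0:ℂ) 1))
    (hkb : ∀ k < n, ∀ z ∈ ball (0:ℂ) 1, bdbar (wk k) z = μ z * bd (wk k) z) :
    ∀ p : ℕ, ∀ z ∈ ball (0:ℂ) 1,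
      (bbelOp μ)^[p] (fun t => ∑ m ∈ Finset.range n, hatStar t ^ m * wk m t) z
        = ∑ m ∈ Finset.range n,
            ofC ((Nat.descFactorial m p : ℕ) : ℂ) * hatStar z ^ (m - p) * wk m z := by
  have hdm : ∀ z ∈ ball (0:ℂ) 1, ∀ m < n, BDiffAt (wk m) z := by
    intro z hz m hm
    have h1 : (1 : WithTop ℕ∞) ≤ ((n : ℕ∞) : WithTop ℕ∞) := by exact_mod_cast hn
    exact ⟨((hks m hm).1.differentiableOn (by exact_mod_cast (show n ≠ 0 by omega))).differentiableAt (isOpen_ball.mem_nhds hz),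
      ((hks m hm).2.differentiableOn (by exact_mod_cast (show n ≠ 0 by omega))).differentiableAt (isOpen_ball.mem_nhds hz)⟩
  intro p
  induction p with
  | zero =>
    intro z hz
    rw [Function.iterate_zero_apply]
    refine Finset.sum_congr rfl fun m _ => ?_
    rw [Nat.descFactorial_zero, Nat.cast_one, ofC_one, one_mul, Nat.sub_zero]
  | succ p ih =>
    intro z hz
    rw [Function.iterate_succ_apply']
    have hterm : ∀ m, ∀ x : ℂ, BDiffAt
        (fun t => ofC ((Nat.descFactorial m p : ℕ) : ℂ) * hatStar t ^ (m - p) * wk m t) x →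
        True := fun _ _ _ => trivial
    have hdiff : ∀ x ∈ ball (0:ℂ) 1, ∀ m ∈ Finset.range n,
        BDiffAt (fun t => ofC ((Nat.descFactorial m p : ℕ) : ℂ) * hatStar t ^ (m - p) * wk m t) x := by
      intro x hx m hm
      exact BDiffAt.mul'
        (BDiffAt.mul' (BDiffAt_const _ x) (BDiffAt_hatStar_pow (m - p) x))
        (hdm x hx m (Finset.mem_range.mp hm))
    have hcong := bbelOp_congr (μ := μ) isOpen_ball
      (f := (bbelOp μ)^[p] (fun t => ∑ m ∈ Finset.range n, hatStar t ^ m * wk m t))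
      (g := fun x => ∑ m ∈ Finset.range n,
        ofC ((Nat.descFactorial m p : ℕ) : ℂ) * hatStar x ^ (m - p) * wk m x)
      ih hz
    rw [hcong, bbelOp_sum μ _ _ (hdiff z hz)]
    refine Finset.sum_congr rfl fun m hm => ?_
    have hmn := Finset.mem_range.mp hm
    have hbel : bdbar (wk m) z - μ z * bd (wk m) z = 0 := by
      rw [hkb m hmn z hz, sub_self]
    have hmul : ∀ t : ℂ, ofC ((Nat.descFactorial m p : ℕ) : ℂ) * hatStar t ^ (m - p) * wk m t
        = ofC ((Nat.descFactorial m p : ℕ) : ℂ) * hatStar t ^ (m - p) * wk m t := fun _ => rfl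
    rw [bbelOp_term μ _ _ _ (hdm z hz m hmn), hbel, mul_zero, add_zero]
    have hc : ((Nat.descFactorial m p : ℕ) : ℂ) * ((m - p : ℕ) : ℂ)
        = ((Nat.descFactorial m (p + 1) : ℕ) : ℂ) := by
      rw [Nat.descFactorial_succ]
      push_cast
      ring
    rw [hc, show m - p - 1 = m - (p + 1) from by omega]

end BicomplexAux
namespace BicomplexAux

open Bicomplex Metric

theorem scalar_sum (k L : ℕ) (hL : 1 ≤ L) :
    ∑ i ∈ Finset.range (L + 1),
      (-1 : ℂ) ^ i / (i.factorial : ℂ) * ((Nat.descFactorial (k + L) (k + i) : ℕ) : ℂ) = 0 := by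
  have h : ∀ i ∈ Finset.range (L + 1),
      (-1 : ℂ) ^ i / (i.factorial : ℂ) * ((Nat.descFactorial (k + L) (k + i) : ℕ) : ℂ)
        = (((k + L).factorial : ℂ) / (L.factorial : ℂ)) * ((-1) ^ i * (L.choose i : ℂ)) := by
    intro i hi
    have hiL : i ≤ L := Nat.lt_succ_iff.mp (Finset.mem_range.mp hi)
    have hnat := Nat.factorial_mul_descFactorial (show k + i ≤ k + L by omega)
    rw [show k + L - (k + i) = L - i from by omega] at hnat
    have hnatC : ((L - i).factorial : ℂ) * ((Nat.descFactorial (k + L) (k + i) : ℕ) : ℂ)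
        = ((k + L).factorial : ℂ) := by exact_mod_cast congrArg (Nat.cast : ℕ → ℂ) hnat
    have hLi0 : ((L - i).factorial : ℂ) ≠ 0 := Nat.cast_ne_zero.mpr (Nat.factorial_ne_zero _)
    have hi0 : ((i.factorial : ℕ) : ℂ) ≠ 0 := Nat.cast_ne_zero.mpr (Nat.factorial_ne_zero _)
    have hL0 : ((L.factorial : ℕ) : ℂ) ≠ 0 := Nat.cast_ne_zero.mpr (Nat.factorial_ne_zero _)
    have hdF : ((Nat.descFactorial (k + L) (k + i) : ℕ) : ℂ)
        = ((k + L).factorial : ℂ) / ((L - i).factorial : ℂ) := by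
      rw [eq_div_iff hLi0, mul_comm]; exact hnatC
    have hC : ((L.choose i : ℕ) : ℂ) = (L.factorial : ℂ) / ((i.factorial : ℂ) * ((L - i).factorial : ℂ)) :=
      Nat.cast_choose ℂ hiL
    rw [hdF, hC]
    field_simp
  rw [Finset.sum_congr rfl h, ← Finset.mul_sum]
  have h2 : ((∑ i ∈ Finset.range (L + 1), (-1 : ℤ) ^ i * (L.choose i : ℤ) : ℤ) : ℂ) = 0 := by
    rw [Int.alternating_sum_range_choose_of_ne (by omega : L ≠ 0)]
    simp
  push_cast at h2
  rw [h2, mul_zero]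

theorem inner_sum (n k m : ℕ) (hk : k < n) (hm : m < n) (X : Bicomplex) :
    ∑ i ∈ Finset.range (n - k),
      ofC ((-1 : ℂ) ^ i / (i.factorial : ℂ)) * X ^ i *
        (ofC ((Nat.descFactorial m (k + i) : ℕ) : ℂ) * X ^ (m - (k + i)))
      = if m = k then ofC ((k.factorial : ℕ) : ℂ) else 0 := by
  rcases lt_trichotomy m k with hlt | heq | hgt
  · rw [if_neg (by omega)]
    refine Finset.sum_eq_zero fun i hi => ?_
    have : Nat.descFactorial m (k + i) = 0 := Nat.descFactorial_eq_zero_iff_lt.mpr (by omega)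
    rw [this]
    simp [ofC_zero]
  · subst heq
    rw [if_pos rfl, Finset.sum_eq_single 0]
    · simp [Nat.descFactorial_self, ofC_one]
    · intro i _ hi0
      have : Nat.descFactorial m (m + i) = 0 :=
        Nat.descFactorial_eq_zero_iff_lt.mpr (by omega)
      rw [this]
      simp [ofC_zero]
    · intro h
      exact absurd (Finset.mem_range.mpr (by omega)) h
  · rw [if_neg (by omega)]
    set L := m - k with hLdef
    have hL1 : 1 ≤ L := by omega
    have hsub : Finset.range (L + 1) ⊆ Finset.range (n - k) :=
      Finset.range_subset_range.mpr (by omega)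
    rw [← Finset.sum_subset hsub (by
      intro i _ hi
      have hiL : L + 1 ≤ i := by
        by_contra hcon
        exact hi (Finset.mem_range.mpr (by omega))
      have : Nat.descFactorial m (k + i) = 0 :=
        Nat.descFactorial_eq_zero_iff_lt.mpr (by omega)
      rw [this]
      simp [ofC_zero])]
    have hterm : ∀ i ∈ Finset.range (L + 1),
        ofC ((-1 : ℂ) ^ i / (i.factorial : ℂ)) * X ^ i *
          (ofC ((Nat.descFactorial m (k + i) : ℕ) : ℂ) * X ^ (m - (k + i)))
        = ofC ((-1 : ℂ) ^ i / (i.factorial : ℂ) * ((Nat.descFactorial (k + L) (k + i) : ℕ) : ℂ))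
            * X ^ L := by
      intro i hi
      have hiL : i ≤ L := Nat.lt_succ_iff.mp (Finset.mem_range.mp hi)
      rw [show m - (k + i) = L - i from by omega, show m = k + L from by omega, ofC_mul]
      rw [show ofC ((-1 : ℂ) ^ i / (i.factorial : ℂ)) * X ^ i *
          (ofC ((Nat.descFactorial (k + L) (k + i) : ℕ) : ℂ) * X ^ (L - i))
        = ofC ((-1 : ℂ) ^ i / (i.factorial : ℂ)) *
            ofC ((Nat.descFactorial (k + L) (k + i) : ℕ) : ℂ) * (X ^ i * X ^ (L - i)) from by ring,
        ← pow_add, show i + (L - i) = L from by omega]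
    rw [Finset.sum_congr rfl hterm, ← Finset.sum_mul, ← ofC_sum, scalar_sum k L hL1,
      ofC_zero, zero_mul]

end BicomplexAux
open BicomplexAux
theorem stmt14 (n : ℕ) (hn : 1 ≤ n) (c : ℝ) (hc : c < 1) (μ : ℂ → Bicomplex)
    (hμs : BContDiffOn (n - 1 : ℕ) μ (ball (0:ℂ) 1))
    (hμb : ∀ z ∈ ball (0:ℂ) 1, bnorm (μ z) ≤ c)
    (wk : ℕ → ℂ → Bicomplex)
    (hks : ∀ k < n, BContDiffOn (n : ℕ) (wk k) (ball (0:ℂ) 1))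
    (hkb : ∀ k < n, ∀ z ∈ ball (0:ℂ) 1, bdbar (wk k) z = μ z * bd (wk k) z) :
    ∀ k < n, ∀ z ∈ ball (0:ℂ) 1,
      wk k z = ofC (k.factorial : ℂ)⁻¹ *
        ∑ i ∈ Finset.range (n - k),
          ofC ((-1 : ℂ) ^ i / (i.factorial : ℂ)) * (hatStar z) ^ i *
            (bbelOp μ)^[k + i]
              (fun t => ∑ m ∈ Finset.range n, (hatStar t) ^ m * wk m t) z := by
  intro k hk z hz
  have hiter := iter_formula n hn μ wk hks hkb
  have h1 : ∀ i ∈ Finset.range (n - k),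
      ofC ((-1 : ℂ) ^ i / (i.factorial : ℂ)) * (hatStar z) ^ i *
        (bbelOp μ)^[k + i] (fun t => ∑ m ∈ Finset.range n, (hatStar t) ^ m * wk m t) z
      = ∑ m ∈ Finset.range n,
          ofC ((-1 : ℂ) ^ i / (i.factorial : ℂ)) * (hatStar z) ^ i *
            (ofC ((Nat.descFactorial m (k + i) : ℕ) : ℂ) * hatStar z ^ (m - (k + i)) * wk m z) := by
    intro i _
    rw [hiter (k + i) z hz, Finset.mul_sum]
  rw [Finset.sum_congr rfl h1, Finset.sum_comm]
  have h2 : ∀ m ∈ Finset.range n,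
      (∑ i ∈ Finset.range (n - k),
        ofC ((-1 : ℂ) ^ i / (i.factorial : ℂ)) * (hatStar z) ^ i *
          (ofC ((Nat.descFactorial m (k + i) : ℕ) : ℂ) * hatStar z ^ (m - (k + i)) * wk m z))
      = (if m = k then ofC ((k.factorial : ℕ) : ℂ) * wk m z else 0) := by
    intro m hm
    have hinner := inner_sum n k m hk (Finset.mem_range.mp hm) (hatStar z)
    have hre : ∀ i ∈ Finset.range (n - k),
        ofC ((-1 : ℂ) ^ i / (i.factorial : ℂ)) * (hatStar z) ^ i *
          (ofC ((Nat.descFactorial m (k + i) : ℕ) : ℂ) * hatStar z ^ (m - (k + i)) * wk m z)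
        = ofC ((-1 : ℂ) ^ i / (i.factorial : ℂ)) * (hatStar z) ^ i *
            (ofC ((Nat.descFactorial m (k + i) : ℕ) : ℂ) * hatStar z ^ (m - (k + i))) * wk m z :=
      fun i _ => by ring
    rw [Finset.sum_congr rfl hre, ← Finset.sum_mul, hinner]
    by_cases hmk : m = k
    · rw [if_pos hmk, if_pos hmk]
    · rw [if_neg hmk, if_neg hmk, zero_mul]
  rw [Finset.sum_congr rfl h2, Finset.sum_ite_eq' (Finset.range n) k
    (fun m => ofC ((k.factorial : ℕ) : ℂ) * wk m z), if_pos (Finset.mem_range.mpr hk),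
    ← mul_assoc, ← ofC_mul, inv_mul_cancel₀ (Nat.cast_ne_zero.mpr (Nat.factorial_ne_zero k)),
    ofC_one, one_mul]

end
end
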